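/- arXiv:1606.03007 — 4 statements merged into one kernel-verified Lean document; each statement's English description precedes it below -/
import Mathlib

section
/- (Carlitz's Euler-Mahonian identity) For all n ≥ 1, Σ_{k≥0} [k+1]_q^n t^k = (Σ_{π∈S_n} t^{des(π)} q^{maj(π)}) / Π_{j=0}^n (1 - t q^j), where [k+1]_q = 1 + q + ⋯ + q^k. -/
open scoped Classical

/-- The descent set of a permutation of `Fin n` (position `i` records a descent
between the `(i+1)`-st and `(i+2)`-nd entries, i.e. paper descent `i+1`). -/
def desSet (n : ℕ) (π : Equiv.Perm (Fin n)) : Finset (Fin n) :=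
  Finset.univ.filter (fun i => ∃ h : (i : ℕ) + 1 < n, π ⟨(i : ℕ) + 1, h⟩ < π i)

/-- The descent number. -/
def des (n : ℕ) (π : Equiv.Perm (Fin n)) : ℕ := (desSet n π).card

/-- The major index: the sum of the (1-based) descent positions. -/
def maj (n : ℕ) (π : Equiv.Perm (Fin n)) : ℕ := ∑ i ∈ desSet n π, ((i : ℕ) + 1)

/-!
Sort a word `w ∈ [0, k]ⁿ` decreasingly, breaking ties by position, and let `π` be the sorting
permutation. Then `w ∘ π` drops strictly at every descent of `π`, so subtracting from `w (π i)` the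
number of descents of `π` at positions `≥ i` leaves a partition with at most `n` parts, all at
most `k - des π`; conversely every such pair of `π` and a partition arises from exactly one word.
The subtracted amounts add up to `maj π`, hence
`[k+1]_qⁿ = ∑_π [des π ≤ k] q^(maj π) G(n, k - des π)`, where `G(n, m)` is the generating
polynomial of partitions in an `n × m` box (the Gaussian binomial `[n+m, n]_q`). Finally the
q-Pascal recursion `G(n+1, m+1) = G(n, m+1) + q^(n+1) G(n+1, m)` shows
`∑_m G(n, m) tᵐ = 1 / ∏_{j=0}^n (1 - t q^j)`.
-/

open Finset Equiv

noncomputable def desFrom (n : ℕ) (π : Perm (Fin n)) (m : ℕ) : ℕ :=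
  #((desSet n π).filter fun i => m ≤ i.val)

section Descents

variable {n : ℕ} (π : Perm (Fin n))

lemma desFrom_zero : desFrom n π 0 = des n π := by
  simp [desFrom, des]

lemma desFrom_eq_zero {m : ℕ} (hm : n ≤ m + 1) : desFrom n π m = 0 := by
  refine card_eq_zero.2 (filter_eq_empty_iff.2 fun i hi => ?_)
  obtain ⟨hi, -⟩ := (mem_filter.1 hi).2
  omega

lemma desFrom_antitone : Antitone (desFrom n π) := fun _ _ hab =>
  card_le_card (monotone_filter_right _ fun _ _ h => hab.trans h)

lemma desFrom_lt_of_mem_desSet {i j : ℕ} {l : Fin n} (hl : l ∈ desSet n π) (hil : i ≤ l)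
    (hlj : (l : ℕ) < j) : desFrom n π j < desFrom n π i := by
  refine card_lt_card ((ssubset_iff_of_subset
    (monotone_filter_right _ fun _ _ h => (hil.trans hlj.le).trans h)).2 ⟨l, ?_, ?_⟩)
  · exact mem_filter.2 ⟨hl, hil⟩
  · simp [hlj]

lemma desFrom_eq_add_ite (i : Fin n) :
    desFrom n π i = desFrom n π (i + 1) + if i ∈ desSet n π then 1 else 0 := by
  have hsplit : (desSet n π).filter (fun j => (i : ℕ) ≤ j.val) =
      (desSet n π).filter (fun j => (i : ℕ) + 1 ≤ j.val) ∪ (desSet n π).filter (· = i) := by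
    ext j
    simp only [mem_union, mem_filter, Fin.ext_iff, ← and_or_left]
    exact and_congr_right fun _ => by omega
  rw [desFrom, desFrom, hsplit, card_union_of_disjoint, filter_eq']
  · split_ifs <;> simp
  · exact disjoint_filter.2 fun j _ h hj => by rw [hj] at h; omega

lemma sum_desFrom : ∑ m : Fin n, desFrom n π m = maj n π := by
  simp only [desFrom, maj, card_filter]
  rw [sum_comm]
  refine sum_congr rfl fun i _ => ?_
  rw [← card_filter, ← Fin.card_Iic, ← filter_ge_eq_Iic]
  simp only [Fin.le_def]

lemma castSucc_mem_desSet {N : ℕ} (π : Perm (Fin (N + 1))) (i : Fin N) :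
    i.castSucc ∈ desSet (N + 1) π ↔ π i.succ < π i.castSucc := by
  simp [desSet, Fin.succ]

lemma lt_of_forall_notMem_desSet {i j : Fin n} (hij : i < j)
    (h : ∀ l, i ≤ l → l < j → l ∉ desSet n π) : π i < π j := by
  obtain _ | N := n
  · exact i.elim0
  refine strictMonoOn_of_lt_succ Set.ordConnected_Icc (fun a ha hai hsa => ?_)
    ⟨le_rfl, hij.le⟩ ⟨hij.le, le_rfl⟩ hij
  obtain ⟨a, rfl⟩ := Fin.eq_castSucc_of_ne_last (fun he : a = Fin.last N => ha (he ▸ isMax_top))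
  rw [Fin.orderSucc_castSucc] at hsa ⊢
  have hnd := h _ hai.1 ((Fin.castSucc_lt_succ (i := a)).trans_le hsa.2)
  rw [castSucc_mem_desSet] at hnd
  exact (not_lt.1 hnd).lt_of_ne (π.injective.ne (Fin.castSucc_lt_succ (i := a)).ne)

end Descents

section Antisort

variable {n : ℕ}

noncomputable def antisort (w : Fin n → ℕ) : Perm (Fin n) := Tuple.sort (OrderDual.toDual ∘ w)

lemma antisort_eq_iff {w : Fin n → ℕ} {π : Perm (Fin n)} :
    antisort w = π ↔ Antitone (w ∘ π) ∧ ∀ i j, i < j → w (π i) = w (π j) → π i < π j := by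
  rw [antisort, eq_comm, Tuple.eq_sort_iff]
  rfl

variable (w : Fin n → ℕ)

lemma antitone_sub_desFrom :
    Antitone fun i => (w (antisort w i) : ℤ) - desFrom n (antisort w) i := by
  obtain ⟨hanti, hstable⟩ := antisort_eq_iff.1 (rfl : antisort w = _)
  obtain _ | N := n
  · exact fun i => i.elim0
  refine Fin.antitone_iff_succ_le.2 fun i => ?_
  have hle := hanti (Fin.castSucc_le_succ i)
  have hstep := desFrom_eq_add_ite (antisort w) i.castSucc
  simp only [Fin.val_castSucc, Function.comp_apply] at hle hstep ⊢
  rw [Fin.val_succ]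
  split_ifs at hstep with hdes
  · have hlt : w (antisort w i.succ) < w (antisort w i.castSucc) :=
      hle.lt_of_ne fun heq => ((castSucc_mem_desSet _ i).1 hdes).not_gt
        (hstable _ _ (Fin.castSucc_lt_succ) heq.symm)
    omega
  · omega

lemma desFrom_antisort_le (i : Fin n) : desFrom n (antisort w) i ≤ w (antisort w i) := by
  have hi := i.isLt
  have h := antitone_sub_desFrom w (show i ≤ ⟨n - 1, by omega⟩ from Fin.le_def.2 (by simp; omega))
  simp only [desFrom_eq_zero _ (show n ≤ n - 1 + 1 by omega)] at h
  omega

lemma sub_desFrom_le_sub_des {k : ℕ} (hw : ∀ x, w x ≤ k) (i : Fin n) :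
    w (antisort w i) - desFrom n (antisort w) i ≤ k - des n (antisort w) := by
  have hi := i.isLt
  have h := antitone_sub_desFrom w (show ⟨0, by omega⟩ ≤ i from Fin.le_def.2 (by simp))
  have := desFrom_antisort_le w i
  have := hw (antisort w ⟨0, by omega⟩)
  simp only [desFrom_zero] at h
  omega

lemma des_antisort_le {k : ℕ} (hw : ∀ x, w x ≤ k) : des n (antisort w) ≤ k := by
  obtain _ | N := n
  · simp [des, desSet]
  have h := desFrom_antisort_le w 0
  rw [Fin.val_zero, desFrom_zero] at h
  exact h.trans (hw _)

lemma antisort_eq_of_antitone (π : Perm (Fin n)) {b : Fin n → ℕ} (hb : Antitone b) :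
    antisort (fun x => b (π⁻¹ x) + desFrom n π (π⁻¹ x)) = π := by
  have hd : Antitone fun i : Fin n => desFrom n π i :=
    (desFrom_antitone π).comp_monotone Fin.val_strictMono.monotone
  refine antisort_eq_iff.2 ⟨?_, fun i j hij heq => ?_⟩
  · simpa [Function.comp_def] using hb.add hd
  simp only [Perm.coe_inv, symm_apply_apply] at heq
  have hdij : desFrom n π j = desFrom n π i := by
    have := hb hij.le
    have := desFrom_antitone π (Fin.le_def.1 hij.le)
    omega
  refine lt_of_forall_notMem_desSet π hij fun l hil hlj hl => ?_
  exact (desFrom_lt_of_mem_desSet π hl hil hlj).ne hdij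

end Antisort

open Polynomial

def boxPartitions (n m : ℕ) : Finset (Fin n → ℕ) :=
  (Fintype.piFinset fun _ => range (m + 1)).filter Antitone

lemma mem_boxPartitions {n m : ℕ} {b : Fin n → ℕ} :
    b ∈ boxPartitions n m ↔ Antitone b ∧ ∀ i, b i ≤ m := by
  simp only [boxPartitions, mem_filter, Fintype.mem_piFinset, mem_range, Nat.lt_succ_iff,
    and_comm]

section BoxPartitions

variable (R : Type*) [CommSemiring R]

noncomputable def boxPartitionPoly (n m : ℕ) : R[X] :=
  ∑ b ∈ boxPartitions n m, X ^ ∑ i, b i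

lemma boxPartitionPoly_zero_left (m : ℕ) : boxPartitionPoly R 0 m = 1 := by
  have : boxPartitions 0 m = {Fin.elim0} := by
    ext b
    simp only [mem_boxPartitions, mem_singleton, Subsingleton.elim b Fin.elim0, iff_true]
    exact ⟨fun i => i.elim0, fun i => i.elim0⟩
  simp [boxPartitionPoly, this]

lemma boxPartitionPoly_zero_right (n : ℕ) : boxPartitionPoly R n 0 = 1 := by
  have : boxPartitions n 0 = {0} := by
    ext b
    simp only [mem_boxPartitions, mem_singleton, nonpos_iff_eq_zero, funext_iff]
    exact ⟨And.right, fun h => ⟨fun i j _ => (h i).symm ▸ (h j).symm ▸ le_rfl, h⟩⟩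
  simp [boxPartitionPoly, this]

lemma antitone_snoc_zero_iff {n : ℕ} {c : Fin n → ℕ} :
    Antitone (Fin.snoc c 0 : Fin (n + 1) → ℕ) ↔ Antitone c := by
  refine ⟨fun h => by
    simpa [Function.comp_def] using h.comp_monotone Fin.strictMono_castSucc.monotone,
    fun h i j hij => ?_⟩
  induction j using Fin.lastCases with
  | last => simp
  | cast j =>
    induction i using Fin.lastCases with
    | last => exact absurd hij (not_le.2 (Fin.castSucc_lt_last j))
    | cast i => simpa using h (Fin.castSucc_le_castSucc_iff.1 hij)

lemma sum_boxPartitions_last_eq_zero (n m : ℕ) :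
    ∑ b ∈ (boxPartitions (n + 1) m).filter (· (Fin.last n) = 0), (X : R[X]) ^ ∑ i, b i =
      boxPartitionPoly R n m := by
  refine sum_nbij' Fin.init (Fin.snoc · 0) (fun b hb => ?_) (fun c hc => ?_)
    (fun b hb => ?_) (fun c _ => Fin.init_snoc _ _) (fun b hb => ?_)
  · obtain ⟨hanti, hbm⟩ := mem_boxPartitions.1 (mem_filter.1 hb).1
    exact mem_boxPartitions.2 ⟨hanti.comp_monotone Fin.strictMono_castSucc.monotone,
      fun i => hbm _⟩
  · obtain ⟨hanti, hcm⟩ := mem_boxPartitions.1 hc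
    refine mem_filter.2 ⟨mem_boxPartitions.2 ⟨antitone_snoc_zero_iff.2 hanti, fun i => ?_⟩, by simp⟩
    induction i using Fin.lastCases <;> simp [hcm]
  · rw [← (mem_filter.1 hb).2, Fin.snoc_init_self]
  · rw [Fin.sum_univ_castSucc, (mem_filter.1 hb).2, add_zero]
    rfl

lemma sum_boxPartitions_last_ne_zero (n m : ℕ) :
    ∑ b ∈ (boxPartitions (n + 1) (m + 1)).filter (¬ · (Fin.last n) = 0), (X : R[X]) ^ ∑ i, b i =
      X ^ (n + 1) * boxPartitionPoly R (n + 1) m := by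
  have hpos : ∀ b ∈ (boxPartitions (n + 1) (m + 1)).filter (¬ · (Fin.last n) = 0), ∀ i, 1 ≤ b i :=
    fun b hb i => by
      obtain ⟨hb, hb0⟩ := mem_filter.1 hb
      have := (mem_boxPartitions.1 hb).1 (Fin.le_last i)
      omega
  rw [boxPartitionPoly, mul_sum]
  refine sum_nbij' (fun b i => b i - 1) (fun c i => c i + 1) (fun b hb => ?_) (fun c hc => ?_)
    (fun b hb => ?_) (fun c _ => ?_) (fun b hb => ?_)
  · obtain ⟨hanti, hbm⟩ := mem_boxPartitions.1 (mem_filter.1 hb).1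
    exact mem_boxPartitions.2 ⟨fun i j hij => Nat.sub_le_sub_right (hanti hij) 1,
      fun i => by have := hbm i; omega⟩
  · obtain ⟨hanti, hcm⟩ := mem_boxPartitions.1 hc
    exact mem_filter.2 ⟨mem_boxPartitions.2 ⟨fun i j hij => Nat.add_le_add_right (hanti hij) 1,
      fun i => Nat.add_le_add_right (hcm i) 1⟩, by simp⟩
  · funext i
    have := hpos b hb i
    simp only
    omega
  · funext i
    simp
  · have hsum : ∑ i, b i = ∑ i, (b i - 1) + (n + 1) := by
      conv_lhs => rw [← sum_congr rfl fun i _ => Nat.sub_add_cancel (hpos b hb i)]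
      simp [sum_add_distrib]
    rw [hsum, pow_add, mul_comm]

lemma boxPartitionPoly_succ_succ (n m : ℕ) :
    boxPartitionPoly R (n + 1) (m + 1) =
      boxPartitionPoly R n (m + 1) + X ^ (n + 1) * boxPartitionPoly R (n + 1) m := by
  rw [boxPartitionPoly, ← sum_filter_add_sum_filter_not _ (· (Fin.last n) = 0),
    sum_boxPartitions_last_eq_zero, sum_boxPartitions_last_ne_zero]

variable {R}

lemma sum_filter_antisort_eq {n : ℕ} (π : Perm (Fin n)) (k : ℕ) :
    ∑ w ∈ (Fintype.piFinset fun _ => range (k + 1)).filter (antisort · = π),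
        (X : R[X]) ^ ∑ x, w x =
      if des n π ≤ k then X ^ maj n π * boxPartitionPoly R n (k - des n π) else 0 := by
  have hfiber : ∀ {w : Fin n → ℕ}, w ∈ (Fintype.piFinset fun _ => range (k + 1)).filter
      (antisort · = π) ↔ (∀ x, w x ≤ k) ∧ antisort w = π := by
    simp
  split_ifs with hk
  swap
  · refine sum_eq_zero fun w hw => absurd ?_ hk
    obtain ⟨hwk, rfl⟩ := hfiber.1 hw
    exact des_antisort_le w hwk
  rw [boxPartitionPoly, mul_sum]
  symm
  refine sum_nbij' (fun b x => b (π⁻¹ x) + desFrom n π (π⁻¹ x))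
    (fun w i => w (π i) - desFrom n π i) (fun b hb => ?_) (fun w hw => ?_)
    (fun b _ => ?_) (fun w hw => ?_) (fun b _ => ?_)
  · obtain ⟨hb, hbk⟩ := mem_boxPartitions.1 hb
    refine hfiber.2 ⟨fun x => ?_, antisort_eq_of_antitone π hb⟩
    have := hbk (π⁻¹ x)
    have := desFrom_antitone π (Nat.zero_le ((π⁻¹ x : Fin n) : ℕ))
    rw [desFrom_zero] at this
    omega
  · obtain ⟨hwk, rfl⟩ := hfiber.1 hw
    refine mem_boxPartitions.2 ⟨fun i j hij => ?_, sub_desFrom_le_sub_des w hwk⟩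
    have hanti := antitone_sub_desFrom w hij
    have := desFrom_antisort_le w i
    have := desFrom_antisort_le w j
    simp only at hanti ⊢
    omega
  · funext i
    simp
  · obtain ⟨-, rfl⟩ := hfiber.1 hw
    funext x
    have h := desFrom_antisort_le w ((antisort w)⁻¹ x)
    simp only [Perm.coe_inv, apply_symm_apply] at h ⊢
    omega
  · rw [← pow_add, sum_add_distrib, Equiv.sum_comp π⁻¹ b,
      Equiv.sum_comp π⁻¹ (fun i => desFrom n π i), sum_desFrom, add_comm]

lemma geom_sum_pow_eq_sum_perm (n k : ℕ) :
    (∑ i ∈ range (k + 1), (X : R[X]) ^ i) ^ n =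
      ∑ π : Perm (Fin n),
        if des n π ≤ k then X ^ maj n π * boxPartitionPoly R n (k - des n π) else 0 := by
  simp_rw [sum_pow', prod_pow_eq_pow_sum, ← sum_filter_antisort_eq]
  exact (sum_fiberwise _ antisort _).symm

end BoxPartitions

section GeneratingFunction

variable {R : Type*} [CommRing R]

lemma one_sub_X_mul_mk_boxPartitionPoly_zero :
    (1 - PowerSeries.X) * PowerSeries.mk (boxPartitionPoly R 0) = 1 := by
  refine PowerSeries.ext fun k => ?_
  rcases k with _ | k
  · simp [boxPartitionPoly_zero_left]
  · simp [sub_mul, PowerSeries.coeff_succ_X_mul, boxPartitionPoly_zero_left]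

lemma one_sub_mul_mk_boxPartitionPoly_succ (n : ℕ) :
    (1 - PowerSeries.C ((X : R[X]) ^ (n + 1)) * PowerSeries.X) *
        PowerSeries.mk (boxPartitionPoly R (n + 1)) =
      PowerSeries.mk (boxPartitionPoly R n) := by
  refine PowerSeries.ext fun k => ?_
  rcases k with _ | k
  · simp [sub_mul, boxPartitionPoly_zero_right]
  · rw [sub_mul, one_mul, map_sub, mul_assoc, PowerSeries.coeff_C_mul,
      PowerSeries.coeff_succ_X_mul]
    simp only [PowerSeries.coeff_mk, boxPartitionPoly_succ_succ, add_sub_cancel_right]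

lemma prod_one_sub_mul_mk_boxPartitionPoly (n : ℕ) :
    (∏ j ∈ range (n + 1), (1 - PowerSeries.C ((X : R[X]) ^ j) * PowerSeries.X)) *
      PowerSeries.mk (boxPartitionPoly R n) = 1 := by
  induction n with
  | zero => simpa using one_sub_X_mul_mk_boxPartitionPoly_zero
  | succ n ih => rw [prod_range_succ, mul_assoc, one_sub_mul_mk_boxPartitionPoly_succ, ih]

end GeneratingFunction

theorem stmt1_general (n : ℕ) :
    (PowerSeries.mk fun k => (∑ i ∈ Finset.range (k + 1), (Polynomial.X : Polynomial ℚ) ^ i) ^ n) *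
        ∏ j ∈ Finset.range (n + 1),
          (1 - PowerSeries.C (R := Polynomial ℚ) (Polynomial.X ^ j) * PowerSeries.X)
      = ∑ π : Equiv.Perm (Fin n),
          PowerSeries.C (R := Polynomial ℚ) (Polynomial.X ^ maj n π) * PowerSeries.X ^ des n π := by
  have hmk : (PowerSeries.mk fun k => (∑ i ∈ range (k + 1), (X : ℚ[X]) ^ i) ^ n) =
      (∑ π : Perm (Fin n), PowerSeries.C (X ^ maj n π) * PowerSeries.X ^ des n π) *
        PowerSeries.mk (boxPartitionPoly ℚ n) := by
    ext k
    simp only [PowerSeries.coeff_mk, geom_sum_pow_eq_sum_perm, sum_mul, map_sum, mul_assoc,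
      PowerSeries.coeff_C_mul, PowerSeries.coeff_X_pow_mul', mul_ite, mul_zero]
  rw [hmk, mul_assoc, mul_comm (PowerSeries.mk _), prod_one_sub_mul_mk_boxPartitionPoly, mul_one]

/-- Carlitz's Euler–Mahonian identity:
`∑_{k≥0} [k+1]_q^n t^k = (∑_{π ∈ S_n} t^{des π} q^{maj π}) / ∏_{j=0}^n (1 - t q^j)`,
as formal power series in `t` with polynomial coefficients in `q`. -/
theorem stmt1 (n : ℕ) (hn : 1 ≤ n) :
    (PowerSeries.mk fun k => (∑ i ∈ Finset.range (k + 1), (Polynomial.X : Polynomial ℚ) ^ i) ^ n) *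
        ∏ j ∈ Finset.range (n + 1),
          (1 - PowerSeries.C (R := Polynomial ℚ) (Polynomial.X ^ j) * PowerSeries.X)
      = ∑ π : Equiv.Perm (Fin n),
          PowerSeries.C (R := Polynomial ℚ) (Polynomial.X ^ maj n π) * PowerSeries.X ^ des n π :=
  stmt1_general n
end

section
/- For (ρ,δ) ∈ I_{r,n} (an increasing colored permutation) and σ ∈ S_n, NNeg([(ρ,δ)σ]^{-1}) = NNeg((ρ,δ)^{-1}); moreover each increasing element (ρ,δ) ∈ I_{r,n} is uniquely determined by the multiset NNeg((ρ,δ)^{-1}). -/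
open scoped Classical

/-!
The colour of a letter `v` in `(ρ,δ)⁻¹` depends only on the colour `δ (ρ⁻¹ v)` carried by the
value `v`, and right multiplication by `σ ∈ S_n` permutes positions without changing which colour
sits on which value; this gives the invariance. Conversely, `desA = 0` says that
`i ↦ (r - δ i, ρ i)` is lexicographically increasing, so the one-line word of `(ρ,δ)` is the list
of pairs `(r - colour v, v)` in increasing order. Since `NNeg((ρ,δ)⁻¹)` determines the colour of
every value, it determines this sorted list and hence `(ρ,δ)`.
-/

/-- The type-A descent set of a colored permutation `(π, c)` (colors `c i < r`),
for the order `j^{c_j} < k^{c_k}` iff `c_j > c_k`, or `c_j = c_k` and `j < k`. -/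
def desAset (n : ℕ) (π : Equiv.Perm (Fin n)) (c : Fin n → ℕ) : Finset (Fin n) :=
  Finset.univ.filter (fun i => ∃ h : (i : ℕ) + 1 < n,
    c i < c ⟨(i : ℕ) + 1, h⟩ ∨ (c i = c ⟨(i : ℕ) + 1, h⟩ ∧ π ⟨(i : ℕ) + 1, h⟩ < π i))

/-- The type-A descent number. -/
def desA (n : ℕ) (π : Equiv.Perm (Fin n)) (c : Fin n → ℕ) : ℕ := (desAset n π c).card

/-- Color of the letter `i` in the inverse of the colored permutation `(π, c)`. -/
def cinv (r n : ℕ) (π : Equiv.Perm (Fin n)) (c : Fin n → ℕ) (i : Fin n) : ℕ :=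
  (r - c (π⁻¹ i)) % r

/-- The multiset `NNeg((π,c)⁻¹)`: each `i` appears with multiplicity equal to the
color of `i` in `(π,c)⁻¹`. -/
def NNegInv (r n : ℕ) (π : Equiv.Perm (Fin n)) (c : Fin n → ℕ) : Multiset (Fin n) :=
  ∑ i : Fin n, Multiset.replicate (cinv r n π c i) i

theorem Nat.eq_of_sub_mod_eq_sub_mod {r a b : ℕ} (ha : a < r) (hb : b < r)
    (h : (r - a) % r = (r - b) % r) : a = b := by
  have key : ∀ x < r, (r - x) % r = if x = 0 then 0 else r - x := by
    intro x hx
    split_ifs with hx0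
    · simp [hx0]
    · exact Nat.mod_eq_of_lt (by omega)
  rw [key a ha, key b hb] at h
  split_ifs at h <;> omega

theorem Equiv.Perm.eq_of_strictMono_comp {α β : Type*} [LinearOrder α] [WellFoundedLT α]
    [Preorder β] {G : α → β} (hG : Function.Injective G) {ρ ρ' : Equiv.Perm α}
    (h : StrictMono (G ∘ ρ)) (h' : StrictMono (G ∘ ρ')) : ρ = ρ' := by
  have hrange : Set.range (G ∘ ρ) = Set.range (G ∘ ρ') := by
    rw [Set.range_comp, Set.range_comp, Equiv.range_eq_univ, Equiv.range_eq_univ]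
  exact Equiv.ext fun i => hG (congrFun ((h.range_inj h').mp hrange) i)

theorem count_nnegInv (r n : ℕ) (π : Equiv.Perm (Fin n)) (c : Fin n → ℕ) (v : Fin n) :
    (NNegInv r n π c).count v = cinv r n π c v := by
  simp [NNegInv, Multiset.count_sum', Multiset.count_replicate]

theorem cinv_mul_perm (r n : ℕ) (ρ σ : Equiv.Perm (Fin n)) (δ : Fin n → ℕ) :
    cinv r n (ρ * σ) (fun i => δ (σ i)) = cinv r n ρ δ := by
  funext v
  simp [cinv, mul_inv_rev, Equiv.Perm.mul_apply]

theorem nnegInv_mul_perm (r n : ℕ) (ρ σ : Equiv.Perm (Fin n)) (δ : Fin n → ℕ) :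
    NNegInv r n (ρ * σ) (fun i => δ (σ i)) = NNegInv r n ρ δ := by
  simp only [NNegInv, cinv_mul_perm]

section Increasing

variable {r n : ℕ} {ρ ρ' : Equiv.Perm (Fin n)} {δ δ' : Fin n → ℕ}

theorem strictMono_of_desA_eq_zero (hδ : ∀ i, δ i < r) (h : desA n ρ δ = 0) :
    StrictMono fun i => toLex (r - δ i, ρ i) := by
  cases n with
  | zero => exact fun a => a.elim0
  | succ m =>
    rw [Fin.strictMono_iff_lt_succ]
    intro i
    have hnotmem := Finset.filter_eq_empty_iff.mp (Finset.card_eq_zero.mp h)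
      (Finset.mem_univ i.castSucc)
    simp only [Fin.val_castSucc, not_exists, not_or, not_and, not_lt] at hnotmem
    obtain ⟨hcolour, hvalue⟩ := hnotmem (by omega)
    have hsucc : (⟨(i : ℕ) + 1, by omega⟩ : Fin (m + 1)) = i.succ := rfl
    rw [hsucc] at hcolour hvalue
    have hδi := hδ i.castSucc
    rcases hcolour.lt_or_eq with hlt | heq
    · exact Prod.Lex.toLex_lt_toLex.mpr (Or.inl (by omega))
    · refine Prod.Lex.toLex_lt_toLex.mpr (Or.inr ⟨by rw [heq], ?_⟩)
      exact (hvalue heq.symm).lt_of_ne (ρ.injective.ne Fin.castSucc_lt_succ.ne)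

theorem eq_of_desA_eq_zero_of_colour_eq (hδ : ∀ i, δ i < r) (hδ' : ∀ i, δ' i < r)
    (hd : desA n ρ δ = 0) (hd' : desA n ρ' δ' = 0)
    (hcolour : ∀ v, δ (ρ⁻¹ v) = δ' (ρ'⁻¹ v)) : ρ = ρ' ∧ δ = δ' := by
  set G : Fin n → Lex (ℕ × Fin n) := fun v => toLex (r - δ (ρ⁻¹ v), v)
  have hG : Function.Injective G := fun a b hab => congrArg (fun x => (ofLex x).2) hab
  have hρ : StrictMono (G ∘ ρ) := by
    convert strictMono_of_desA_eq_zero hδ hd using 2 with i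
    simp [G]
  have hρ' : StrictMono (G ∘ ρ') := by
    convert strictMono_of_desA_eq_zero hδ' hd' using 2 with i
    have hi := hcolour (ρ' i)
    simp only [Equiv.Perm.inv_def, Equiv.symm_apply_apply] at hi
    simp [G, ← hi]
  obtain rfl := Equiv.Perm.eq_of_strictMono_comp hG hρ hρ'
  exact ⟨rfl, funext fun i => by simpa using hcolour (ρ i)⟩

end Increasing

theorem stmt4_general (r n : ℕ) :
    (∀ (ρ : Equiv.Perm (Fin n)) (δ : Fin n → ℕ), (∀ i, δ i < r) → desA n ρ δ = 0 →
      ∀ σ : Equiv.Perm (Fin n),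
        NNegInv r n (ρ * σ) (fun i => δ (σ i)) = NNegInv r n ρ δ) ∧
    (∀ (ρ ρ' : Equiv.Perm (Fin n)) (δ δ' : Fin n → ℕ),
      (∀ i, δ i < r) → (∀ i, δ' i < r) → desA n ρ δ = 0 → desA n ρ' δ' = 0 →
      NNegInv r n ρ δ = NNegInv r n ρ' δ' → ρ = ρ' ∧ δ = δ') := by
  refine ⟨fun ρ δ _ _ σ => nnegInv_mul_perm r n ρ σ δ, ?_⟩
  intro ρ ρ' δ δ' hδ hδ' hd hd' hN
  refine eq_of_desA_eq_zero_of_colour_eq hδ hδ' hd hd' fun v => ?_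
  have hcinv := congrArg (Multiset.count v) hN
  rw [count_nnegInv, count_nnegInv] at hcinv
  exact Nat.eq_of_sub_mod_eq_sub_mod (hδ _) (hδ' _) hcinv

/-- For an increasing colored permutation `(ρ,δ)` and `σ ∈ S_n`,
`NNeg(((ρ,δ)σ)⁻¹) = NNeg((ρ,δ)⁻¹)` (note `(ρ,δ)σ` is the colored permutation
`(ρ ∘ σ, i ↦ δ(σ i))`); moreover each increasing element is uniquely determined
by the multiset `NNeg((ρ,δ)⁻¹)`. -/
theorem stmt4 (r n : ℕ) (hr : 1 ≤ r) :
    (∀ (ρ : Equiv.Perm (Fin n)) (δ : Fin n → ℕ), (∀ i, δ i < r) → desA n ρ δ = 0 →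
      ∀ σ : Equiv.Perm (Fin n),
        NNegInv r n (ρ * σ) (fun i => δ (σ i)) = NNegInv r n ρ δ) ∧
    (∀ (ρ ρ' : Equiv.Perm (Fin n)) (δ δ' : Fin n → ℕ),
      (∀ i, δ i < r) → (∀ i, δ' i < r) → desA n ρ δ = 0 → desA n ρ' δ' = 0 →
      NNegInv r n ρ δ = NNegInv r n ρ' δ' → ρ = ρ' ∧ δ = δ') :=
  stmt4_general r n
end

section
/- The map sending (π,ε) ∈ Z_r ≀ S_n to the pair (σ, X), where σ ∈ S_n is determined by (π,ε) = (ρ,δ)∘σ with (ρ,δ) increasing, and X = NNeg((π,ε)^{-1}), is a bijection from Z_r ≀ S_n onto the set of pairs (σ, X) with σ ∈ S_n and X a multiset on [n] in which every element has multiplicity strictly less than r. -/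
/-!
Write `y j := (r - x j) % r`. Since `a ↦ (r - a) % r` is an involution of `{0, …, r - 1}`,
prescribing the colors `x` of `(π, c)⁻¹` is the same as prescribing `c = y ∘ π`. With these
colors, `(π, c) = (ρ, δ) ∘ σ` forces `ρ = π σ⁻¹` and `δ = y ∘ ρ`, and `(ρ, y ∘ ρ)` is increasing
exactly when `ρ` lists `{1, …, n}` in increasing order for the key `j ↦ (y j, j)`, compared
lexicographically with the first component reversed. Such a `ρ` exists and is unique.
-/

open scoped Classical

open Equiv OrderDual

lemma Fin.strictMono_iff_lt_add_one {α : Type*} [Preorder α] {n : ℕ} {f : Fin n → α} :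
    StrictMono f ↔ ∀ (i : Fin n) (h : (i : ℕ) + 1 < n), f i < f ⟨i + 1, h⟩ := by
  cases n with
  | zero => simp [StrictMono]
  | succ m =>
    rw [Fin.strictMono_iff_lt_succ]
    constructor
    · intro h i hi
      exact h ⟨i, by omega⟩
    · intro h i
      exact h i.castSucc (by simp)

lemma Nat.sub_sub_mod_mod_of_lt {r a : ℕ} (ha : a < r) : (r - (r - a) % r) % r = a := by
  rcases Nat.eq_zero_or_pos a with rfl | ha₀
  · simp
  · rw [Nat.mod_eq_of_lt (by omega : r - a < r), Nat.sub_sub_self ha.le, Nat.mod_eq_of_lt ha]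

lemma existsUnique_strictMono_comp_perm {α : Type*} [LinearOrder α] {n : ℕ} {f : Fin n → α}
    (hf : Function.Injective f) : ∃! ρ : Perm (Fin n), StrictMono (f ∘ ρ) :=
  ⟨Tuple.sort f,
    (Tuple.monotone_sort f).strictMono_of_injective (hf.comp (Tuple.sort f).injective),
    fun _ hρ => Equiv.ext fun i =>
      hf (congrFun (Tuple.unique_monotone hρ.monotone (Tuple.monotone_sort f)) i)⟩

/-- The paper's order on letters `j^c` is the lexicographic order on `(toDual c, j)`. -/
lemma desA_eq_zero_iff {n : ℕ} {ρ : Perm (Fin n)} {δ : Fin n → ℕ} :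
    desA n ρ δ = 0 ↔ StrictMono fun i => toLex (toDual (δ i), ρ i) := by
  rw [Fin.strictMono_iff_lt_add_one, desA, desAset, Finset.card_eq_zero,
    Finset.filter_eq_empty_iff]
  simp only [Finset.mem_univ, true_implies, not_exists]
  refine forall_congr' fun i => forall_congr' fun h => ?_
  have hne : ρ i ≠ ρ ⟨i + 1, h⟩ := ρ.injective.ne (Fin.ne_of_val_ne (by simp))
  simp only [Prod.Lex.toLex_lt_toLex', toDual_le_toDual, toDual_inj, not_or, not_and, not_lt]
  exact and_congr_right fun _ => imp_congr_right fun _ => hne.le_iff_lt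

lemma cinv_eq_iff {r n : ℕ} {π : Perm (Fin n)} {c x : Fin n → ℕ} (hc : ∀ j, c j < r)
    (hx : ∀ i, x i < r) : (∀ i, cinv r n π c i = x i) ↔ ∀ j, c j = (r - x (π j)) % r := by
  constructor
  · intro h j
    rw [← h (π j), cinv, Perm.coe_inv, symm_apply_apply, Nat.sub_sub_mod_mod_of_lt (hc j)]
  · intro h i
    rw [cinv, h, Perm.coe_inv, apply_symm_apply, Nat.sub_sub_mod_mod_of_lt (hx i)]

theorem stmt5_general (r n : ℕ) (σ : Equiv.Perm (Fin n)) (x : Fin n → ℕ)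
    (hx : ∀ i, x i < r) :
    ∃! pc : Equiv.Perm (Fin n) × (Fin n → ℕ),
      (∀ i, pc.2 i < r) ∧
      (∃ (ρ : Equiv.Perm (Fin n)) (δ : Fin n → ℕ), (∀ i, δ i < r) ∧ desA n ρ δ = 0 ∧
        pc.1 = ρ * σ ∧ ∀ i, pc.2 i = δ (σ i)) ∧
      (∀ i, cinv r n pc.1 pc.2 i = x i) := by
  set y : Fin n → ℕ := fun j => (r - x j) % r
  have hy : ∀ j, y j < r := fun j => Nat.mod_lt _ (Nat.zero_lt_of_lt (hx j))
  have hkey : Function.Injective fun j => toLex (toDual (y j), j) :=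
    fun j k h => congrArg (fun p => (ofLex p).2) h
  obtain ⟨ρ₀, hρ₀, hρ₀_unique⟩ := existsUnique_strictMono_comp_perm hkey
  refine ⟨(ρ₀ * σ, y ∘ ⇑(ρ₀ * σ)), ⟨fun _ => hy _, ⟨ρ₀, y ∘ ρ₀, fun _ => hy _,
    desA_eq_zero_iff.2 hρ₀, rfl, fun _ => rfl⟩, (cinv_eq_iff (fun _ => hy _) hx).2 fun _ => rfl⟩, ?_⟩
  rintro ⟨π, c⟩ ⟨hc, ⟨ρ, δ, -, hdes, rfl, hδ⟩, hcinv⟩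
  have hcy : ∀ j, c j = y ((ρ * σ) j) := (cinv_eq_iff hc hx).1 hcinv
  have hδy : δ = y ∘ ρ := funext fun k => by simpa [hcy] using (hδ (σ⁻¹ k)).symm
  subst hδy
  obtain rfl : ρ = ρ₀ := hρ₀_unique ρ (desA_eq_zero_iff.1 hdes)
  exact Prod.ext rfl (funext hcy)

/-- The map `(π,ε) ↦ (σ, X)`, where `(π,ε) = (ρ,δ) ∘ σ` with `(ρ,δ)` increasing and
`X = NNeg((π,ε)⁻¹)` (recorded by its multiplicity function), is a bijection from
`Z_r ≀ S_n` onto pairs `(σ, X)` with `σ ∈ S_n` and `X` a multiset on `[n]` with all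
multiplicities `< r`: every such pair has a unique colored-permutation preimage. -/
theorem stmt5 (r n : ℕ) (hr : 1 ≤ r) (σ : Equiv.Perm (Fin n)) (x : Fin n → ℕ)
    (hx : ∀ i, x i < r) :
    ∃! pc : Equiv.Perm (Fin n) × (Fin n → ℕ),
      (∀ i, pc.2 i < r) ∧
      (∃ (ρ : Equiv.Perm (Fin n)) (δ : Fin n → ℕ), (∀ i, δ i < r) ∧ desA n ρ δ = 0 ∧
        pc.1 = ρ * σ ∧ ∀ i, pc.2 i = δ (σ i)) ∧
      (∀ i, cinv r n pc.1 pc.2 i = x i) :=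
  stmt5_general r n σ x hx
end

section
/- For r ≥ 1, every monomial b^r_{(σ,X)} = (Π_{j∈Des(σ)} z_{{σ(1),…,σ(j)}}) · Π_{j∈X} z_{{σ(1),…,σ(j)}} (with σ ∈ S_n and X a multiset on [n] with multiplicities < r) lies outside the monomial ideal N_{r,n}, and conversely every monomial of T_n not in N_{r,n} equals b^r_{(σ,X)} for a unique such pair (σ,X). -/
open scoped Classical

noncomputable section

/-- The polynomial ring `T_n = ℂ[z_A : A ⊆ [n]]`. -/
abbrev Tn (n : ℕ) := MvPolynomial (Finset (Fin n)) ℂ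

/-- The initial segment `[k] = {1,…,k}` of `[n]`, as a subset of `Fin n`. -/
def initSeg (n k : ℕ) : Finset (Fin n) :=
  Finset.univ.filter (fun j : Fin n => (j : ℕ) < k)

/-- `A` is an initial segment `[k]` for some `k ≥ 0`. -/
def IsInit (n : ℕ) (A : Finset (Fin n)) : Prop := ∃ k, A = initSeg n k

/-- The monomial ideal `N_{r,n}` of Proposition "LT". -/
def Nrn (r n : ℕ) : Ideal (Tn n) :=
  Ideal.span (
    {MvPolynomial.X (∅ : Finset (Fin n))} ∪
    {p | ∃ A : Finset (Fin n), A.Nonempty ∧ IsInit n A ∧ p = MvPolynomial.X A ^ r} ∪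
    {p | ∃ A : Finset (Fin n), ¬ IsInit n A ∧ p = MvPolynomial.X A ^ (r + 1)} ∪
    {p | ∃ A B : Finset (Fin n), ¬ A ⊆ B ∧ ¬ B ⊆ A ∧ p = MvPolynomial.X A * MvPolynomial.X B} ∪
    {p | ∃ A B : Finset (Fin n), ¬ IsInit n A ∧ A ⊂ B ∧
      (∀ a ∈ A, ∀ b ∈ B \ A, a < b) ∧ p = MvPolynomial.X A ^ r * MvPolynomial.X B} ∪
    {p | ∃ A B : Finset (Fin n), ¬ IsInit n B ∧ A ⊂ B ∧
      (∃ l : ℕ, ¬ initSeg n l ⊆ A ∧ initSeg n l ⊆ B ∧ B \ A ⊆ initSeg n l) ∧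
      p = MvPolynomial.X A * MvPolynomial.X B ^ r} ∪
    {p | ∃ A₁ A₂ A₃ : Finset (Fin n), ¬ IsInit n A₂ ∧ A₁ ⊂ A₂ ∧ A₂ ⊂ A₃ ∧
      (∀ a ∈ A₂ \ A₁, ∀ b ∈ A₃ \ A₂, a < b) ∧
      p = MvPolynomial.X A₁ * MvPolynomial.X A₂ ^ r * MvPolynomial.X A₃})

/-- The Garsia–Stanton descent monomial `â_σ = ∏_{j ∈ Des(σ)} z_{{σ(1),…,σ(j)}}`. -/
def ahat (n : ℕ) (σ : Equiv.Perm (Fin n)) : Tn n :=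
  ∏ i ∈ desSet n σ, MvPolynomial.X ((Finset.Iic i).image σ)

/-- `b^r_{(σ,X)} = â_σ · ∏_{j∈X} z_{{σ(1),…,σ(j)}}`, with `X` given by its multiplicity
function `x : Fin n → ℕ`. -/
def bmon (r n : ℕ) (σ : Equiv.Perm (Fin n)) (x : Fin n → ℕ) : Tn n :=
  ahat n σ * ∏ i : Fin n, MvPolynomial.X ((Finset.Iic i).image σ) ^ x i


namespace Stmt14

open Finset

variable {n : ℕ}

def Egens (r n : ℕ) : Set (Finset (Fin n) →₀ ℕ) :=
  {Finsupp.single (∅ : Finset (Fin n)) 1} ∪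
  {e | ∃ A : Finset (Fin n), A.Nonempty ∧ IsInit n A ∧ e = Finsupp.single A r} ∪
  {e | ∃ A : Finset (Fin n), ¬ IsInit n A ∧ e = Finsupp.single A (r + 1)} ∪
  {e | ∃ A B : Finset (Fin n), ¬ A ⊆ B ∧ ¬ B ⊆ A ∧
    e = Finsupp.single A 1 + Finsupp.single B 1} ∪
  {e | ∃ A B : Finset (Fin n), ¬ IsInit n A ∧ A ⊂ B ∧
    (∀ a ∈ A, ∀ b ∈ B \ A, a < b) ∧ e = Finsupp.single A r + Finsupp.single B 1} ∪
  {e | ∃ A B : Finset (Fin n), ¬ IsInit n B ∧ A ⊂ B ∧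
    (∃ l : ℕ, ¬ initSeg n l ⊆ A ∧ initSeg n l ⊆ B ∧ B \ A ⊆ initSeg n l) ∧
    e = Finsupp.single A 1 + Finsupp.single B r} ∪
  {e | ∃ A₁ A₂ A₃ : Finset (Fin n), ¬ IsInit n A₂ ∧ A₁ ⊂ A₂ ∧ A₂ ⊂ A₃ ∧
    (∀ a ∈ A₂ \ A₁, ∀ b ∈ A₃ \ A₂, a < b) ∧
    e = Finsupp.single A₁ 1 + Finsupp.single A₂ r + Finsupp.single A₃ 1}


variable {n : ℕ}

lemma mX (A : Finset (Fin n)) :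
    (MvPolynomial.X A : Tn n) = MvPolynomial.monomial (Finsupp.single A 1) 1 := by
  simpa using (MvPolynomial.X_pow_eq_monomial (n := A) (e := 1) (R := ℂ))

lemma Nrn_eq (r n : ℕ) :
    Nrn r n = Ideal.span ((fun s => MvPolynomial.monomial s (1 : ℂ)) '' Egens r n) := by
  apply congrArg Ideal.span
  apply Set.eq_of_subset_of_subset
  · rintro p hp
    simp only [Set.mem_union, Set.mem_singleton_iff, Set.mem_setOf_eq] at hp
    simp only [Set.mem_image, Egens, Set.mem_union, Set.mem_singleton_iff, Set.mem_setOf_eq]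
    rcases hp with ((((((h | ⟨A, h1, h2, h⟩) | ⟨A, h1, h⟩) | ⟨A, B, h1, h2, h⟩) |
        ⟨A, B, h1, h2, h3, h⟩) | ⟨A, B, h1, h2, h3, h⟩) | ⟨A₁, A₂, A₃, h1, h2, h3, h4, h⟩) <;>
      subst h
    · exact ⟨_, Or.inl (Or.inl (Or.inl (Or.inl (Or.inl (Or.inl rfl))))), (mX _).symm⟩
    · exact ⟨_, Or.inl (Or.inl (Or.inl (Or.inl (Or.inl (Or.inr ⟨A, h1, h2, rfl⟩))))),
        (MvPolynomial.X_pow_eq_monomial).symm⟩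
    · exact ⟨_, Or.inl (Or.inl (Or.inl (Or.inl (Or.inr ⟨A, h1, rfl⟩)))),
        (MvPolynomial.X_pow_eq_monomial).symm⟩
    · exact ⟨_, Or.inl (Or.inl (Or.inl (Or.inr ⟨A, B, h1, h2, rfl⟩))), by
        simp [mX, MvPolynomial.monomial_mul]⟩
    · exact ⟨_, Or.inl (Or.inl (Or.inr ⟨A, B, h1, h2, h3, rfl⟩)), by
        simp [mX, MvPolynomial.monomial_pow, MvPolynomial.monomial_mul, Finsupp.smul_single, smul_eq_mul, mul_one, one_pow]⟩
    · exact ⟨_, Or.inl (Or.inr ⟨A, B, h1, h2, h3, rfl⟩), by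
        simp [mX, MvPolynomial.monomial_pow, MvPolynomial.monomial_mul, Finsupp.smul_single, smul_eq_mul, mul_one, one_pow]⟩
    · exact ⟨_, Or.inr ⟨A₁, A₂, A₃, h1, h2, h3, h4, rfl⟩, by
        simp [mX, MvPolynomial.monomial_pow, MvPolynomial.monomial_mul, Finsupp.smul_single, smul_eq_mul, mul_one, one_pow]⟩
  · rintro p ⟨e, he, rfl⟩
    simp only [Egens, Set.mem_union, Set.mem_singleton_iff, Set.mem_setOf_eq] at he
    simp only [Set.mem_union, Set.mem_singleton_iff, Set.mem_setOf_eq]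
    rcases he with ((((((h | ⟨A, h1, h2, h⟩) | ⟨A, h1, h⟩) | ⟨A, B, h1, h2, h⟩) |
        ⟨A, B, h1, h2, h3, h⟩) | ⟨A, B, h1, h2, h3, h⟩) | ⟨A₁, A₂, A₃, h1, h2, h3, h4, h⟩) <;>
      subst h
    · exact Or.inl (Or.inl (Or.inl (Or.inl (Or.inl (Or.inl (mX _).symm)))))
    · exact Or.inl (Or.inl (Or.inl (Or.inl (Or.inl (Or.inr
        ⟨A, h1, h2, (MvPolynomial.X_pow_eq_monomial).symm⟩)))))
    · exact Or.inl (Or.inl (Or.inl (Or.inl (Or.inr ⟨A, h1, (MvPolynomial.X_pow_eq_monomial).symm⟩))))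
    · exact Or.inl (Or.inl (Or.inl (Or.inr ⟨A, B, h1, h2, by
        simp [mX, MvPolynomial.monomial_mul]⟩)))
    · exact Or.inl (Or.inl (Or.inr ⟨A, B, h1, h2, h3, by
        simp [mX, MvPolynomial.monomial_pow, MvPolynomial.monomial_mul, Finsupp.smul_single, smul_eq_mul, mul_one, one_pow]⟩))
    · exact Or.inl (Or.inr ⟨A, B, h1, h2, h3, by
        simp [mX, MvPolynomial.monomial_pow, MvPolynomial.monomial_mul, Finsupp.smul_single, smul_eq_mul, mul_one, one_pow]⟩)
    · exact Or.inr ⟨A₁, A₂, A₃, h1, h2, h3, h4, by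
        simp [mX, MvPolynomial.monomial_pow, MvPolynomial.monomial_mul, Finsupp.smul_single, smul_eq_mul, mul_one, one_pow]⟩

lemma not_mem_Nrn_iff (r n : ℕ) (d : Finset (Fin n) →₀ ℕ) :
    (MvPolynomial.monomial d (1 : ℂ)) ∉ Nrn r n ↔ ∀ s ∈ Egens r n, ¬ s ≤ d := by
  rw [Nrn_eq, MvPolynomial.mem_ideal_span_monomial_image]
  simp [MvPolynomial.support_monomial]

/-! ### generic facts about `σ`-segments -/

lemma card_seg (σ : Equiv.Perm (Fin n)) (i : Fin n) :
    ((Iic i).image σ).card = (i : ℕ) + 1 := by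
  rw [Finset.card_image_of_injective _ σ.injective, Fin.card_Iic]

lemma seg_inj (σ : Equiv.Perm (Fin n)) {i j : Fin n}
    (h : (Iic i).image σ = (Iic j).image σ) : i = j := by
  have := congrArg Finset.card h
  rw [card_seg, card_seg] at this
  exact Fin.ext (by omega)

lemma mem_seg (σ : Equiv.Perm (Fin n)) {a i : Fin n} :
    a ∈ (Iic i).image σ ↔ σ.symm a ≤ i := by
  simp only [Finset.mem_image, Finset.mem_Iic]
  constructor
  · rintro ⟨j, hj, rfl⟩; simpa using hj
  · intro h; exact ⟨σ.symm a, h, by simp⟩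

lemma seg_nonempty (σ : Equiv.Perm (Fin n)) (i : Fin n) : ((Iic i).image σ).Nonempty :=
  ⟨σ i, Finset.mem_image_of_mem _ (Finset.mem_Iic.mpr le_rfl)⟩

lemma seg_mono (σ : Equiv.Perm (Fin n)) {i j : Fin n} (h : i ≤ j) :
    (Iic i).image σ ⊆ (Iic j).image σ :=
  Finset.image_subset_image (Finset.Iic_subset_Iic.mpr h)

lemma init_not_des {σ : Equiv.Perm (Fin n)} {i : Fin n}
    (h : IsInit n ((Iic i).image σ)) : i ∉ desSet n σ := by
  intro hd
  simp only [desSet, Finset.mem_filter, Finset.mem_univ, true_and] at hd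
  obtain ⟨h1, h2⟩ := hd
  obtain ⟨k, hk⟩ := h
  have hσi : σ i ∈ (Iic i).image σ := Finset.mem_image_of_mem _ (Finset.mem_Iic.mpr le_rfl)
  rw [hk] at hσi
  simp only [initSeg, Finset.mem_filter, Finset.mem_univ, true_and] at hσi
  have hnext : σ ⟨(i : ℕ) + 1, h1⟩ ∈ (Iic i).image σ := by
    rw [hk]
    simp only [initSeg, Finset.mem_filter, Finset.mem_univ, true_and]
    calc ((σ ⟨(i : ℕ) + 1, h1⟩ : Fin n) : ℕ) < (σ i : ℕ) := h2
    _ < k := hσi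
  rw [mem_seg] at hnext
  simp only [Equiv.symm_apply_apply] at hnext
  have : (i : ℕ) + 1 ≤ (i : ℕ) := hnext
  omega

/-! ### the exponent of `bmon` -/

def expo (σ : Equiv.Perm (Fin n)) (x : Fin n → ℕ) : Finset (Fin n) →₀ ℕ :=
  ∑ i : Fin n, Finsupp.single ((Iic i).image σ) ((if i ∈ desSet n σ then 1 else 0) + x i)

lemma expo_apply (σ : Equiv.Perm (Fin n)) (x : Fin n → ℕ) (i : Fin n) :
    expo σ x ((Iic i).image σ) = (if i ∈ desSet n σ then 1 else 0) + x i := by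
  rw [expo, Finsupp.finset_sum_apply]
  rw [Finset.sum_eq_single i]
  · rw [Finsupp.single_eq_same]
  · intro j _ hji
    exact Finsupp.single_eq_of_ne' (fun h => hji (seg_inj σ h))
  · intro h; exact absurd (Finset.mem_univ i) h

lemma expo_apply_ne (σ : Equiv.Perm (Fin n)) (x : Fin n → ℕ) {S : Finset (Fin n)}
    (h : ∀ i, S ≠ (Iic i).image σ) : expo σ x S = 0 := by
  rw [expo, Finsupp.finset_sum_apply]
  apply Finset.sum_eq_zero
  intro i _
  exact Finsupp.single_eq_of_ne' (fun hh => h i hh.symm)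

lemma expo_support (σ : Equiv.Perm (Fin n)) (x : Fin n → ℕ) {S : Finset (Fin n)}
    (h : expo σ x S ≠ 0) : ∃ i, S = (Iic i).image σ := by
  by_contra hc
  push_neg at hc
  exact h (expo_apply_ne σ x hc)

lemma prod_monomial {ι : Type*} (s : Finset ι) (f : ι → (Finset (Fin n) →₀ ℕ)) :
    (∏ i ∈ s, MvPolynomial.monomial (f i) (1 : ℂ)) = MvPolynomial.monomial (∑ i ∈ s, f i) 1 := by
  induction s using Finset.cons_induction with
  | empty => simp
  | cons a s ha ih =>
    rw [Finset.prod_cons, Finset.sum_cons, ih, MvPolynomial.monomial_mul, one_mul]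

lemma bmon_eq (r : ℕ) (σ : Equiv.Perm (Fin n)) (x : Fin n → ℕ) :
    bmon r n σ x = MvPolynomial.monomial (expo σ x) 1 := by
  have h1 : ahat n σ = ∏ i : Fin n,
      MvPolynomial.X ((Iic i).image σ) ^ (if i ∈ desSet n σ then 1 else 0) := by
    rw [ahat]
    rw [← Finset.univ_inter (desSet n σ), ← Finset.prod_ite_mem]
    apply Finset.prod_congr rfl
    intro i _
    by_cases h : i ∈ desSet n σ <;> simp [h]
  rw [bmon, h1, ← Finset.prod_mul_distrib]
  simp_rw [← pow_add, MvPolynomial.X_pow_eq_monomial]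
  rw [prod_monomial, expo]

section Machinery
variable (d : Finset (Fin n) →₀ ℕ)

def chainF : Finset (Finset (Fin n)) := insert Finset.univ d.support

lemma univ_mem_chain : Finset.univ ∈ chainF d := Finset.mem_insert_self _ _
lemma supp_mem_chain {S : Finset (Fin n)} (h : S ∈ d.support) : S ∈ chainF d :=
  Finset.mem_insert_of_mem h

def cF (a : Fin n) : Finset ℕ := ((chainF d).filter fun S => a ∈ S).image Finset.card

lemma cF_nonempty (a : Fin n) : (cF d a).Nonempty :=
  ⟨(Finset.univ : Finset (Fin n)).card,
    Finset.mem_image_of_mem _ (Finset.mem_filter.mpr ⟨univ_mem_chain d, Finset.mem_univ a⟩)⟩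

def cfun (a : Fin n) : ℕ := (cF d a).min' (cF_nonempty d a)

def keyf (a : Fin n) : ℕ := n * cfun d a + (a : ℕ)

def sigd : Equiv.Perm (Fin n) := Tuple.sort (keyf d)

lemma cfun_le {a : Fin n} {S : Finset (Fin n)} (hS : S ∈ chainF d) (ha : a ∈ S) :
    cfun d a ≤ S.card :=
  Finset.min'_le _ _ (Finset.mem_image_of_mem _ (Finset.mem_filter.mpr ⟨hS, ha⟩))

lemma cfun_exists (a : Fin n) : ∃ S ∈ chainF d, a ∈ S ∧ S.card = cfun d a := by
  have := Finset.min'_mem _ (cF_nonempty d a)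
  simp only [cF, Finset.mem_image, Finset.mem_filter] at this
  obtain ⟨S, ⟨h1, h2⟩, h3⟩ := this
  exact ⟨S, h1, h2, h3⟩

lemma le_cfun {a : Fin n} {m : ℕ} (h : ∀ S ∈ chainF d, a ∈ S → m ≤ S.card) : m ≤ cfun d a := by
  obtain ⟨S, h1, h2, h3⟩ := cfun_exists d a
  exact h3 ▸ h S h1 h2

lemma key_le_cfun_le {a b : Fin n} (h : keyf d a ≤ keyf d b) : cfun d a ≤ cfun d b := by
  by_contra hc
  push_neg at hc
  have hb := b.isLt
  have h2 : n * (cfun d b + 1) ≤ n * cfun d a := Nat.mul_le_mul_left n hc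
  rw [Nat.mul_succ] at h2
  simp only [keyf] at h
  omega

lemma keyf_inj : Function.Injective (keyf d) := by
  intro a b h
  have h1 := key_le_cfun_le d (le_of_eq h)
  have h2 := key_le_cfun_le d (le_of_eq h.symm)
  have hc : cfun d a = cfun d b := le_antisymm h1 h2
  simp only [keyf, hc] at h
  exact Fin.ext (by omega)

lemma val_le_of_key {a b : Fin n} (hc : cfun d a = cfun d b) (h : keyf d a ≤ keyf d b) :
    a ≤ b := by
  simp only [keyf, hc] at h
  exact Fin.le_def.mpr (by omega)

lemma downclosed {I : Finset (Fin n)} (h : ∀ i ∈ I, ∀ j : Fin n, j ≤ i → j ∈ I) (j : Fin n) :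
    j ∈ I ↔ (j : ℕ) < I.card := by
  constructor
  · intro hj
    have hsub : Finset.Iic j ⊆ I := fun k hk => h j hj k (Finset.mem_Iic.mp hk)
    have := Finset.card_le_card hsub
    rw [Fin.card_Iic] at this
    omega
  · intro hj
    by_contra hnj
    have hsub : I ⊆ Finset.Iio j := fun k hk => Finset.mem_Iio.mpr (by
      by_contra hk2
      push_neg at hk2
      exact hnj (h k hk j hk2))
    have := Finset.card_le_card hsub
    rw [Fin.card_Iio] at this
    omega


variable (hch : ∀ S ∈ d.support, ∀ T ∈ d.support, S ⊆ T ∨ T ⊆ S)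
include hch

lemma chain_total : ∀ S ∈ chainF d, ∀ T ∈ chainF d, S ⊆ T ∨ T ⊆ S := by
  intro S hS T hT
  rcases Finset.mem_insert.mp hS with rfl | hS
  · exact Or.inr (Finset.subset_univ _)
  rcases Finset.mem_insert.mp hT with rfl | hT
  · exact Or.inl (Finset.subset_univ _)
  exact hch S hS T hT

lemma chain_card_le {S T : Finset (Fin n)} (hS : S ∈ chainF d) (hT : T ∈ chainF d)
    (h : S.card ≤ T.card) : S ⊆ T := by
  rcases chain_total d hch S hS T hT with h' | h'
  · exact h'
  · rw [Finset.eq_of_subset_of_card_le h' h]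

lemma mem_of_cfun_le {S : Finset (Fin n)} {a : Fin n} (hS : S ∈ chainF d)
    (h : cfun d a ≤ S.card) : a ∈ S := by
  obtain ⟨T, hT, haT, hTc⟩ := cfun_exists d a
  exact chain_card_le d hch hT hS (by omega) haT

variable (σ : Equiv.Perm (Fin n)) (hmono : Monotone (keyf d ∘ σ))
include hmono

lemma L_mem {S : Finset (Fin n)} (hS : S ∈ chainF d) (j : Fin n) :
    σ j ∈ S ↔ (j : ℕ) < S.card := by
  classical
  set I := Finset.univ.filter (fun j => σ j ∈ S) with hI
  have hdc : ∀ i ∈ I, ∀ j' : Fin n, j' ≤ i → j' ∈ I := by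
    intro i hi j' hj'
    simp only [hI, Finset.mem_filter, Finset.mem_univ, true_and] at hi ⊢
    have h1 : keyf d (σ j') ≤ keyf d (σ i) := hmono hj'
    have h2 : cfun d (σ j') ≤ cfun d (σ i) := key_le_cfun_le d h1
    have h3 : cfun d (σ i) ≤ S.card := cfun_le d hS hi
    exact mem_of_cfun_le d hch hS (le_trans h2 h3)
  have hcard : I.card = S.card := by
    have hIm : I = S.map σ.symm.toEmbedding := by
      ext k
      simp only [hI, Finset.mem_filter, Finset.mem_univ, true_and, Finset.mem_map,
        Equiv.coe_toEmbedding]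
      constructor
      · intro hk; exact ⟨σ k, hk, by simp⟩
      · rintro ⟨a, ha, rfl⟩; simpa using ha
    rw [hIm, Finset.card_map]
  have := downclosed hdc j
  simp only [hI, Finset.mem_filter, Finset.mem_univ, true_and] at this
  rw [this, hcard]

lemma L_seg {S : Finset (Fin n)} (hS : S ∈ chainF d) {i : Fin n} (hc : (i : ℕ) + 1 = S.card) :
    (Iic i).image σ = S := by
  ext a
  simp only [Finset.mem_image, Finset.mem_Iic]
  constructor
  · rintro ⟨j, hj, rfl⟩
    rw [L_mem d hch σ hmono hS j]
    have : (j : ℕ) ≤ i := hj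
    omega
  · intro ha
    refine ⟨σ.symm a, ?_, by simp⟩
    have h2 : σ (σ.symm a) ∈ S := by simpa using ha
    rw [L_mem d hch σ hmono hS] at h2
    exact Fin.le_def.mpr (by omega)

lemma L_step {j : Fin n} (h1 : (j : ℕ) + 1 < n) (hns : (Iic j).image σ ∉ d.support) :
    σ j < σ ⟨(j : ℕ) + 1, h1⟩ := by
  set j' : Fin n := ⟨(j : ℕ) + 1, h1⟩ with hj'
  have hjj' : j < j' := by simp [hj', Fin.lt_def]
  have hkey : keyf d (σ j) ≤ keyf d (σ j') := hmono (le_of_lt hjj')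
  have hc1 : cfun d (σ j) ≤ cfun d (σ j') := key_le_cfun_le d hkey
  have hc2 : cfun d (σ j') ≤ cfun d (σ j) := by
    obtain ⟨S, hS, haS, hSc⟩ := cfun_exists d (σ j)
    have hcard : (j : ℕ) < S.card := (L_mem d hch σ hmono hS j).mp haS
    have hne : S.card ≠ (j : ℕ) + 1 := by
      intro hcc
      have := L_seg d hch σ hmono hS (i := j) hcc.symm
      rcases Finset.mem_insert.mp hS with rfl | hSs
      · rw [Finset.card_univ, Fintype.card_fin] at hcc; omega
      · exact hns (this ▸ hSs)
    have : σ j' ∈ S := (L_mem d hch σ hmono hS j').mpr (by simp [hj']; omega)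
    calc cfun d (σ j') ≤ S.card := cfun_le d hS this
    _ = cfun d (σ j) := hSc
  have hceq : cfun d (σ j) = cfun d (σ j') := le_antisymm hc1 hc2
  have hle : σ j ≤ σ j' := val_le_of_key d hceq hkey
  have hne : σ j ≠ σ j' := fun h => by
    have := σ.injective h
    rw [this] at hjj'
    exact lt_irrefl _ hjj'
  exact lt_of_le_of_ne hle hne

end Machinery


lemma keyf_def (d : Finset (Fin n) →₀ ℕ) (a : Fin n) :
    keyf d a = n * cfun d a + (a : ℕ) := rfl

lemma sigd_mono (d : Finset (Fin n) →₀ ℕ) : Monotone (keyf d ∘ (sigd d)) :=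
  Tuple.monotone_sort _

lemma mem_chain_iff (d : Finset (Fin n) →₀ ℕ) {S : Finset (Fin n)} :
    S ∈ chainF d ↔ S = Finset.univ ∨ S ∈ d.support :=
  Finset.mem_insert


theorem part1_main (r : ℕ) (hr : 1 ≤ r) (σ : Equiv.Perm (Fin n)) (x : Fin n → ℕ)
    (hx : ∀ i, x i < r) (s : Finset (Fin n) →₀ ℕ)
    (hs : s ∈ Egens r n) :
    ¬ s ≤ expo σ x := by
  intro hle
  simp only [Egens, Set.mem_union, Set.mem_singleton_iff, Set.mem_setOf_eq] at hs
  set e := expo σ x with he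
  have hub : ∀ i, e ((Iic i).image σ) ≤ r := by
    intro i
    rw [he, expo_apply]
    have := hx i
    split_ifs <;> omega
  have hform : ∀ A, 1 ≤ e A → ∃ i, A = (Iic i).image σ := fun A h =>
    expo_support σ x (by rw [← he]; omega)
  have hdes : ∀ i, r ≤ e ((Iic i).image σ) →
      ∃ h : (i : ℕ) + 1 < n, σ ⟨(i : ℕ) + 1, h⟩ < σ i := by
    intro i h
    rw [he, expo_apply] at h
    by_cases hd : i ∈ desSet n σ
    · simpa [desSet] using hd
    · simp only [hd, if_false, zero_add] at h
      exact absurd h (by have := hx i; omega)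
  have hlt_idx : ∀ i j : Fin n, (Iic i).image σ ⊂ (Iic j).image σ → i < j := by
    intro i j hij
    by_contra hc
    push_neg at hc
    exact hij.2 (seg_mono σ hc)
  have hmem_self : ∀ i : Fin n, σ i ∈ (Iic i).image σ := by
    intro i
    rw [mem_seg]
    simp
  have hmem_le : ∀ (a : Fin n) (i j : Fin n), (σ.symm a : ℕ) ≤ (j : ℕ) → a ∈ (Iic j).image σ := by
    intro a i j h
    rw [mem_seg]
    exact Fin.le_def.mpr h
  have hnmem : ∀ (a : Fin n) (i : Fin n), (i : ℕ) < (σ.symm a : ℕ) → a ∉ (Iic i).image σ := by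
    intro a i h hmem
    rw [mem_seg] at hmem
    have := Fin.le_def.mp hmem
    omega
  rcases hs with ((((((h | ⟨A, h1, h2, h⟩) | ⟨A, h1, h⟩) | ⟨A, B, h1, h2, h⟩) |
      ⟨A, B, h1, h2, h3, h⟩) | ⟨A, B, h1, h2, h3, h⟩) |
      ⟨A₁, A₂, A₃, h1, h2, h3, h4, h⟩) <;> subst h
  · -- z_∅
    have h1 : 1 ≤ e ∅ := Finsupp.single_le_iff.mp hle
    obtain ⟨i, hi⟩ := hform ∅ h1
    exact (seg_nonempty σ i).ne_empty hi.symm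
  · -- initial segment power r
    have hA : r ≤ e A := Finsupp.single_le_iff.mp hle
    obtain ⟨i, rfl⟩ := hform A (le_trans hr hA)
    obtain ⟨hl, hd⟩ := hdes i hA
    exact init_not_des h2 (by
      simp only [desSet, Finset.mem_filter, Finset.mem_univ, true_and]
      exact ⟨hl, hd⟩)
  · -- power r+1
    have hA : r + 1 ≤ e A := Finsupp.single_le_iff.mp hle
    obtain ⟨i, rfl⟩ := hform A (by omega)
    exact absurd (hub i) (by omega)
  · -- incomparable
    have hA : 1 ≤ e A := Finsupp.single_le_iff.mp (le_trans (self_le_add_right _ _) hle)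
    have hB : 1 ≤ e B := Finsupp.single_le_iff.mp (le_trans (self_le_add_left _ _) hle)
    obtain ⟨i, rfl⟩ := hform A hA
    obtain ⟨j, rfl⟩ := hform B hB
    rcases le_total i j with hij | hij
    · exact h1 (seg_mono σ hij)
    · exact h2 (seg_mono σ hij)
  · -- z_A^r z_B, A below B, gap condition
    have hA : r ≤ e A := Finsupp.single_le_iff.mp (le_trans (self_le_add_right _ _) hle)
    have hB : 1 ≤ e B := Finsupp.single_le_iff.mp (le_trans (self_le_add_left _ _) hle)
    obtain ⟨i, rfl⟩ := hform A (le_trans hr hA)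
    obtain ⟨j, rfl⟩ := hform B hB
    have hij : i < j := hlt_idx i j h2
    obtain ⟨hl, hd⟩ := hdes i hA
    set b : Fin n := σ ⟨(i : ℕ) + 1, hl⟩ with hb
    have hbB : b ∈ (Iic j).image σ := by
      apply hmem_le b i j
      simp [hb]
      have := Fin.lt_def.mp hij
      omega
    have hbA : b ∉ (Iic i).image σ := by
      apply hnmem b i
      simp [hb]
    have := h3 (σ i) (hmem_self i) b (Finset.mem_sdiff.mpr ⟨hbB, hbA⟩)
    exact absurd hd (not_lt.mpr (le_of_lt this))
  · -- z_A z_B^r, initial-segment-ℓ condition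
    have hA : 1 ≤ e A := Finsupp.single_le_iff.mp (le_trans (self_le_add_right _ _) hle)
    have hB : r ≤ e B := Finsupp.single_le_iff.mp (le_trans (self_le_add_left _ _) hle)
    obtain ⟨i, rfl⟩ := hform A hA
    obtain ⟨j, rfl⟩ := hform B (le_trans hr hB)
    have hij : i < j := hlt_idx i j h2
    obtain ⟨hl, hd⟩ := hdes j hB
    obtain ⟨l, hl1, hl2, hl3⟩ := h3
    have hjB : σ j ∈ (Iic j).image σ := hmem_self j
    have hjA : σ j ∉ (Iic i).image σ := by
      apply hnmem (σ j) i
      simp [Fin.lt_def.mp hij]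
    have hjseg : σ j ∈ initSeg n l := hl3 (Finset.mem_sdiff.mpr ⟨hjB, hjA⟩)
    simp only [initSeg, Finset.mem_filter, Finset.mem_univ, true_and] at hjseg
    have hnext : σ ⟨(j : ℕ) + 1, hl⟩ ∈ initSeg n l := by
      simp only [initSeg, Finset.mem_filter, Finset.mem_univ, true_and]
      have := Fin.lt_def.mp hd
      omega
    have := hl2 hnext
    rw [mem_seg] at this
    simp only [Equiv.symm_apply_apply] at this
    have := Fin.le_def.mp this
    simp at this
  · -- triple
    have hA1 : 1 ≤ e A₁ := Finsupp.single_le_iff.mp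
      (le_trans (le_trans (self_le_add_right _ _) (self_le_add_right _ _)) hle)
    have hA2 : r ≤ e A₂ := Finsupp.single_le_iff.mp
      (le_trans (le_trans (self_le_add_left _ _) (self_le_add_right _ _)) hle)
    have hA3 : 1 ≤ e A₃ := Finsupp.single_le_iff.mp (le_trans (self_le_add_left _ _) hle)
    obtain ⟨i₁, rfl⟩ := hform A₁ hA1
    obtain ⟨i₂, rfl⟩ := hform A₂ (le_trans hr hA2)
    obtain ⟨i₃, rfl⟩ := hform A₃ hA3
    have h12 : i₁ < i₂ := hlt_idx _ _ h2
    have h23 : i₂ < i₃ := hlt_idx _ _ h3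
    obtain ⟨hl, hd⟩ := hdes i₂ hA2
    set b : Fin n := σ ⟨(i₂ : ℕ) + 1, hl⟩ with hb
    have hbB : b ∈ (Iic i₃).image σ := by
      apply hmem_le b i₂ i₃
      simp [hb]
      have := Fin.lt_def.mp h23
      omega
    have hbA : b ∉ (Iic i₂).image σ := by
      apply hnmem b i₂
      simp [hb]
    have haA2 : σ i₂ ∈ (Iic i₂).image σ := hmem_self i₂
    have haA1 : σ i₂ ∉ (Iic i₁).image σ := by
      apply hnmem (σ i₂) i₁
      simp [Fin.lt_def.mp h12]
    have := h4 (σ i₂) (Finset.mem_sdiff.mpr ⟨haA2, haA1⟩) b (Finset.mem_sdiff.mpr ⟨hbB, hbA⟩)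
    exact absurd hd (not_lt.mpr (le_of_lt this))

lemma mem1 (r : ℕ) : Finsupp.single (∅ : Finset (Fin n)) 1 ∈ Egens r n := by
  simp only [Egens, Set.mem_union, Set.mem_singleton_iff, Set.mem_setOf_eq]
  tauto

lemma mem2 (r : ℕ) {A : Finset (Fin n)} (h1 : A.Nonempty) (h2 : IsInit n A) :
    Finsupp.single A r ∈ Egens r n := by
  simp only [Egens, Set.mem_union, Set.mem_singleton_iff, Set.mem_setOf_eq]
  exact Or.inl (Or.inl (Or.inl (Or.inl (Or.inl (Or.inr ⟨A, h1, h2, rfl⟩)))))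

lemma mem3 (r : ℕ) {A : Finset (Fin n)} (h1 : ¬ IsInit n A) :
    Finsupp.single A (r + 1) ∈ Egens r n := by
  simp only [Egens, Set.mem_union, Set.mem_singleton_iff, Set.mem_setOf_eq]
  exact Or.inl (Or.inl (Or.inl (Or.inl (Or.inr ⟨A, h1, rfl⟩))))

lemma mem4 (r : ℕ) {A B : Finset (Fin n)} (h1 : ¬ A ⊆ B) (h2 : ¬ B ⊆ A) :
    Finsupp.single A 1 + Finsupp.single B 1 ∈ Egens r n := by
  simp only [Egens, Set.mem_union, Set.mem_singleton_iff, Set.mem_setOf_eq]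
  exact Or.inl (Or.inl (Or.inl (Or.inr ⟨A, B, h1, h2, rfl⟩)))

lemma mem5 (r : ℕ) {A B : Finset (Fin n)} (h1 : ¬ IsInit n A) (h2 : A ⊂ B)
    (h3 : ∀ a ∈ A, ∀ b ∈ B \ A, a < b) :
    Finsupp.single A r + Finsupp.single B 1 ∈ Egens r n := by
  simp only [Egens, Set.mem_union, Set.mem_singleton_iff, Set.mem_setOf_eq]
  exact Or.inl (Or.inl (Or.inr ⟨A, B, h1, h2, h3, rfl⟩))

lemma mem6 (r : ℕ) {A B : Finset (Fin n)} (h1 : ¬ IsInit n B) (h2 : A ⊂ B)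
    (h3 : ∃ l : ℕ, ¬ initSeg n l ⊆ A ∧ initSeg n l ⊆ B ∧ B \ A ⊆ initSeg n l) :
    Finsupp.single A 1 + Finsupp.single B r ∈ Egens r n := by
  simp only [Egens, Set.mem_union, Set.mem_singleton_iff, Set.mem_setOf_eq]
  exact Or.inl (Or.inr ⟨A, B, h1, h2, h3, rfl⟩)

lemma mem7 (r : ℕ) {A₁ A₂ A₃ : Finset (Fin n)} (h1 : ¬ IsInit n A₂) (h2 : A₁ ⊂ A₂)
    (h3 : A₂ ⊂ A₃) (h4 : ∀ a ∈ A₂ \ A₁, ∀ b ∈ A₃ \ A₂, a < b) :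
    Finsupp.single A₁ 1 + Finsupp.single A₂ r + Finsupp.single A₃ 1 ∈ Egens r n := by
  simp only [Egens, Set.mem_union, Set.mem_singleton_iff, Set.mem_setOf_eq]
  exact Or.inr ⟨A₁, A₂, A₃, h1, h2, h3, h4, rfl⟩

lemma add_single_le {d : Finset (Fin n) →₀ ℕ} {A B : Finset (Fin n)} {j k : ℕ}
    (hAB : A ≠ B) (hA : j ≤ d A) (hB : k ≤ d B) :
    Finsupp.single A j + Finsupp.single B k ≤ d := by
  rw [Finsupp.le_def]
  intro s
  rw [Finsupp.add_apply, Finsupp.single_apply, Finsupp.single_apply]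
  by_cases h1 : A = s <;> by_cases h2 : B = s
  · exact absurd (h1.trans h2.symm) hAB
  · subst h1; simp [h2]; omega
  · subst h2; simp [h1]; omega
  · simp [h1, h2]

lemma add_single_le3 {d : Finset (Fin n) →₀ ℕ} {A B C : Finset (Fin n)} {j k l : ℕ}
    (hAB : A ≠ B) (hAC : A ≠ C) (hBC : B ≠ C) (hA : j ≤ d A) (hB : k ≤ d B) (hC : l ≤ d C) :
    Finsupp.single A j + Finsupp.single B k + Finsupp.single C l ≤ d := by
  rw [Finsupp.le_def]
  intro s
  rw [Finsupp.add_apply, Finsupp.add_apply, Finsupp.single_apply, Finsupp.single_apply,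
    Finsupp.single_apply]
  by_cases h1 : A = s <;> by_cases h2 : B = s <;> by_cases h3 : C = s
  · exact absurd (h1.trans h2.symm) hAB
  · exact absurd (h1.trans h2.symm) hAB
  · exact absurd (h1.trans h3.symm) hAC
  · subst h1; simp [h2, h3]; omega
  · exact absurd (h2.trans h3.symm) hBC
  · subst h2; simp [h1, h3]; omega
  · subst h3; simp [h1, h2]; omega
  · simp [h1, h2, h3]

lemma mono_of_succ (f : Fin n → ℕ)
    (h : ∀ (j : ℕ) (h1 : j + 1 < n), f ⟨j, by omega⟩ ≤ f ⟨j + 1, h1⟩) : Monotone f := by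
  intro a b hab
  obtain ⟨k, hk⟩ : ∃ k, (b : ℕ) = (a : ℕ) + k := ⟨(b : ℕ) - (a : ℕ), by
    have := Fin.le_def.mp hab; omega⟩
  clear hab
  induction k generalizing b with
  | zero => have : a = b := Fin.ext (by omega); rw [this]
  | succ k ih =>
    have hb := b.isLt
    have hm : (a : ℕ) + k < n := by omega
    have hm2 : (a : ℕ) + k + 1 < n := by omega
    have hbe : b = ⟨(a : ℕ) + k + 1, hm2⟩ := Fin.ext (by simp; omega)
    rw [hbe]
    calc f a ≤ f ⟨(a : ℕ) + k, hm⟩ := ih (b := ⟨(a : ℕ) + k, hm⟩) (by simp)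
    _ ≤ f ⟨(a : ℕ) + k + 1, hm2⟩ := h ((a : ℕ) + k) hm2

theorem part2_core (r : ℕ) (hr : 1 ≤ r) (d : Finset (Fin n) →₀ ℕ)
    (hE : ∀ s ∈ Egens r n, ¬ s ≤ d) :
    ∃! p : Equiv.Perm (Fin n) × (Fin n → ℕ),
      (∀ i, p.2 i < r) ∧ d = expo p.1 p.2 := by
  classical
  -- basic consequences of hE
  have N1 : d ∅ = 0 := by
    by_contra h
    exact hE _ (mem1 r) (Finsupp.single_le_iff.mpr (by omega))
  have N2 : ∀ A : Finset (Fin n), A.Nonempty → IsInit n A → d A < r := by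
    intro A h1 h2
    by_contra h
    exact hE _ (mem2 r h1 h2) (Finsupp.single_le_iff.mpr (by omega))
  have N3 : ∀ A : Finset (Fin n), A.Nonempty → d A ≤ r := by
    intro A h1
    by_cases h2 : IsInit n A
    · exact le_of_lt (N2 A h1 h2)
    · by_contra h
      exact hE _ (mem3 r h2) (Finsupp.single_le_iff.mpr (by omega))
  have hch : ∀ S ∈ d.support, ∀ T ∈ d.support, S ⊆ T ∨ T ⊆ S := by
    intro S hS T hT
    by_contra h
    push_neg at h
    have hne : S ≠ T := fun hh => h.1 (hh ▸ Finset.Subset.refl S)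
    exact hE _ (mem4 r h.1 h.2) (add_single_le hne
      (Nat.one_le_iff_ne_zero.mpr (Finsupp.mem_support_iff.mp hS))
      (Nat.one_le_iff_ne_zero.mpr (Finsupp.mem_support_iff.mp hT)))
  set σ : Equiv.Perm (Fin n) := sigd d with hσ
  have hmono : Monotone (keyf d ∘ σ) := sigd_mono d
  have G2 : ∀ i : Fin n, i ∈ desSet n σ → (Iic i).image σ ∈ d.support := by
    intro i hi
    by_contra hns
    simp only [desSet, Finset.mem_filter, Finset.mem_univ, true_and] at hi
    obtain ⟨hl, hd⟩ := hi
    exact absurd (L_step d hch σ hmono hl hns) (not_lt.mpr (le_of_lt hd))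
  set x : Fin n → ℕ := fun i =>
    d ((Iic i).image σ) - (if i ∈ desSet n σ then 1 else 0) with hx
  have G3 : ∀ i : Fin n, (if i ∈ desSet n σ then 1 else 0) + x i = d ((Iic i).image σ) := by
    intro i
    by_cases hi : i ∈ desSet n σ
    · have h1 : 1 ≤ d ((Iic i).image σ) :=
        Nat.one_le_iff_ne_zero.mpr (Finsupp.mem_support_iff.mp (G2 i hi))
      simp only [hx, hi, if_true]
      omega
    · simp [hx, hi]
  -- the main bound on x
  have G4 : ∀ i : Fin n, x i < r := by
    intro i
    have hne : ((Iic i).image σ).Nonempty := seg_nonempty σ i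
    have hub : d ((Iic i).image σ) ≤ r := N3 _ hne
    suffices hkey : d ((Iic i).image σ) = r → i ∈ desSet n σ by
      by_cases hi : i ∈ desSet n σ
      · simp only [hx, hi, if_true]; omega
      · have : d ((Iic i).image σ) ≠ r := fun h => hi (hkey h)
        simp only [hx, hi, if_false]
        omega
    intro hdr
    by_contra hnd
    have hsupp : (Iic i).image σ ∈ d.support := Finsupp.mem_support_iff.mpr (by omega)
    have hSchain : (Iic i).image σ ∈ chainF d := supp_mem_chain d hsupp
    have hninit : ¬ IsInit n ((Iic i).image σ) := fun h => absurd (N2 _ hne h) (by omega)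
    have hn1 : (i : ℕ) + 1 < n := by
      by_contra hcc
      have hieq : (i : ℕ) + 1 = n := by have := i.isLt; omega
      have hcard : ((Iic i).image σ).card = n := by rw [card_seg]; omega
      have huniv : (Iic i).image σ = Finset.univ :=
        (Finset.card_eq_iff_eq_univ _).mp (by rw [hcard, Fintype.card_fin])
      exact hninit ⟨n, by rw [huniv]; ext a; simp [initSeg, a.isLt]⟩
    set i' : Fin n := ⟨(i : ℕ) + 1, hn1⟩ with hi'
    have hno : σ i < σ i' := by
      have h1 : ¬ σ i' < σ i := fun hcc => hnd (by
        simp only [desSet, Finset.mem_filter, Finset.mem_univ, true_and]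
        exact ⟨hn1, hcc⟩)
      have h2 : σ i ≠ σ i' := fun h => by
        have := σ.injective h
        simp only [hi'] at this
        exact absurd (congrArg Fin.val this) (by simp)
      exact lt_of_le_of_ne (not_lt.mp h1) h2
    obtain ⟨Q, hQchain, hQmem, hQcard⟩ := cfun_exists d (σ i')
    have hQlarge : (i : ℕ) + 1 < Q.card := by
      have := (L_mem d hch σ hmono hQchain i').mp hQmem
      simpa [hi'] using this
    have hAQ : (Iic i).image σ ⊂ Q := by
      have hsub : (Iic i).image σ ⊆ Q :=
        chain_card_le d hch hSchain hQchain (by rw [card_seg]; omega)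
      refine Finset.ssubset_iff_subset_ne.mpr ⟨hsub, fun h => ?_⟩
      rw [← h, card_seg] at hQlarge
      omega
    have hminQ : ∀ w ∈ Q \ (Iic i).image σ, σ i' ≤ w := by
      intro w hw
      obtain ⟨hwQ, hwA⟩ := Finset.mem_sdiff.mp hw
      have hpos : (i : ℕ) + 1 ≤ ((σ.symm w : Fin n) : ℕ) := by
        by_contra hcc
        push_neg at hcc
        exact hwA ((mem_seg σ).mpr (Fin.le_def.mpr (by omega)))
      have hk1 : keyf d (σ i') ≤ keyf d (σ (σ.symm w)) :=
        hmono (show i' ≤ σ.symm w from Fin.le_def.mpr (by simpa [hi'] using hpos))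
      rw [Equiv.apply_symm_apply] at hk1
      have hc1 : cfun d (σ i') ≤ cfun d w := key_le_cfun_le d hk1
      have hc2 : cfun d w ≤ cfun d (σ i') := by
        rw [← hQcard]
        exact cfun_le d hQchain hwQ
      exact val_le_of_key d (le_antisymm hc1 hc2) hk1
    have hci : cfun d (σ i) = (i : ℕ) + 1 := by
      apply le_antisymm
      · have hmemi : σ i ∈ (Iic i).image σ :=
          Finset.mem_image_of_mem _ (Finset.mem_Iic.mpr le_rfl)
        have := cfun_le d hSchain hmemi
        rwa [card_seg] at this
      · apply le_cfun
        intro T hT haT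
        have := (L_mem d hch σ hmono hT i).mp haT
        omega
    have hmaxA : ∀ w ∈ (Iic i).image σ, (i : ℕ) + 1 ≤ cfun d w → w ≤ σ i := by
      intro w hw hcw
      have hpos : σ.symm w ≤ i := (mem_seg σ).mp hw
      have hk1 : keyf d (σ (σ.symm w)) ≤ keyf d (σ i) := hmono hpos
      rw [Equiv.apply_symm_apply] at hk1
      have hc1 : cfun d w ≤ cfun d (σ i) := key_le_cfun_le d hk1
      have hceq : cfun d w = cfun d (σ i) := by omega
      exact val_le_of_key d hceq hk1
    by_cases hPex : ∃ T ∈ d.support, T.card ≤ (i : ℕ)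
    · -- there is a predecessor P
      set F := d.support.filter (fun T => T.card ≤ (i : ℕ)) with hF
      have hFne : F.Nonempty := by
        obtain ⟨T, h1, h2⟩ := hPex
        exact ⟨T, Finset.mem_filter.mpr ⟨h1, h2⟩⟩
      obtain ⟨P, hPF, hPmax⟩ := Finset.exists_max_image F Finset.card hFne
      have hPsupp : P ∈ d.support := (Finset.mem_filter.mp hPF).1
      have hPcard : P.card ≤ (i : ℕ) := (Finset.mem_filter.mp hPF).2
      have hPA : P ⊂ (Iic i).image σ := by
        have hsub : P ⊆ (Iic i).image σ :=
          chain_card_le d hch (supp_mem_chain d hPsupp) hSchain (by rw [card_seg]; omega)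
        refine Finset.ssubset_iff_subset_ne.mpr ⟨hsub, fun h => ?_⟩
        rw [h, card_seg] at hPcard
        omega
      have hAnotP : ∀ w ∈ (Iic i).image σ \ P, w ≤ σ i := by
        intro w hw
        obtain ⟨hwA, hwP⟩ := Finset.mem_sdiff.mp hw
        apply hmaxA w hwA
        by_contra hcc
        push_neg at hcc
        obtain ⟨T, hT, hwT, hTc⟩ := cfun_exists d w
        have hTcard : T.card ≤ (i : ℕ) := by omega
        rcases (mem_chain_iff d).mp hT with rfl | hTs
        · rw [Finset.card_univ, Fintype.card_fin] at hTcard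
          have := i.isLt
          omega
        · have hTF : T ∈ F := Finset.mem_filter.mpr ⟨hTs, hTcard⟩
          have : T ⊆ P := chain_card_le d hch (supp_mem_chain d hTs)
            (supp_mem_chain d hPsupp) (hPmax T hTF)
          exact hwP (this hwT)
      have hsiP : σ i ∉ P := fun hmem => by
        have := cfun_le d (supp_mem_chain d hPsupp) hmem
        omega
      have hdP : 1 ≤ d P := Nat.one_le_iff_ne_zero.mpr (Finsupp.mem_support_iff.mp hPsupp)
      by_cases hQs : Q ∈ d.support
      · -- generator 7
        refine hE _ (mem7 r hninit hPA hAQ ?_) ?_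
        · intro a ha b hb
          exact lt_of_le_of_lt (hAnotP a ha) (lt_of_lt_of_le hno (hminQ b hb))
        · exact add_single_le3 hPA.ne (hPA.trans hAQ).ne hAQ.ne hdP (by omega)
            (Nat.one_le_iff_ne_zero.mpr (Finsupp.mem_support_iff.mp hQs))
      · -- Q = univ; generator 6
        have hQuniv : Q = Finset.univ := by
          rcases (mem_chain_iff d).mp hQchain with h | h
          · exact h
          · exact absurd h hQs
        refine hE _ (mem6 r hninit hPA ⟨(σ i : ℕ) + 1, ?_, ?_, ?_⟩) ?_
        · intro hsub
          exact hsiP (hsub (by simp [initSeg]))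
        · intro w hw
          simp only [initSeg, Finset.mem_filter, Finset.mem_univ, true_and] at hw
          by_contra hwA
          have hmem : w ∈ Q \ (Iic i).image σ :=
            Finset.mem_sdiff.mpr ⟨hQuniv ▸ Finset.mem_univ w, hwA⟩
          have h1 := Fin.le_def.mp (hminQ w hmem)
          have h2 := Fin.lt_def.mp hno
          omega
        · intro w hw
          simp only [initSeg, Finset.mem_filter, Finset.mem_univ, true_and]
          exact Nat.lt_succ_of_le (Fin.le_def.mp (hAnotP w hw))
        · exact add_single_le hPA.ne hdP (by omega)
    · -- no predecessor
      push_neg at hPex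
      have hallA : ∀ w ∈ (Iic i).image σ, w ≤ σ i := by
        intro w hwA
        apply hmaxA w hwA
        by_contra hcc
        push_neg at hcc
        obtain ⟨T, hT, hwT, hTc⟩ := cfun_exists d w
        rcases (mem_chain_iff d).mp hT with rfl | hTs
        · rw [Finset.card_univ, Fintype.card_fin] at hTc
          have := i.isLt
          omega
        · exact absurd (by omega : T.card ≤ (i : ℕ)) (not_le.mpr (hPex T hTs))
      by_cases hQs : Q ∈ d.support
      · -- generator 5
        refine hE _ (mem5 r hninit hAQ ?_) ?_
        · intro a ha b hb
          exact lt_of_le_of_lt (hallA a ha) (lt_of_lt_of_le hno (hminQ b hb))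
        · exact add_single_le hAQ.ne (by omega)
            (Nat.one_le_iff_ne_zero.mpr (Finsupp.mem_support_iff.mp hQs))
      · -- S i is an initial segment: contradiction
        have hQuniv : Q = Finset.univ := by
          rcases (mem_chain_iff d).mp hQchain with h | h
          · exact h
          · exact absurd h hQs
        apply hninit
        refine ⟨(σ i : ℕ) + 1, ?_⟩
        ext w
        simp only [initSeg, Finset.mem_filter, Finset.mem_univ, true_and]
        constructor
        · intro hwA
          exact Nat.lt_succ_of_le (Fin.le_def.mp (hallA w hwA))
        · intro hwlt
          by_contra hwA
          have hmem : w ∈ Q \ (Iic i).image σ :=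
            Finset.mem_sdiff.mpr ⟨hQuniv ▸ Finset.mem_univ w, hwA⟩
          have h1 := Fin.le_def.mp (hminQ w hmem)
          have h2 := Fin.lt_def.mp hno
          omega
  -- d is the exponent of (σ, x)
  have G5 : d = expo σ x := by
    apply Finsupp.ext
    intro S
    by_cases hS : ∃ i : Fin n, S = (Iic i).image σ
    · obtain ⟨i, rfl⟩ := hS
      rw [expo_apply]
      exact (G3 i).symm
    · push_neg at hS
      rw [expo_apply_ne σ x hS]
      by_contra hne0
      have hsupp : S ∈ d.support := Finsupp.mem_support_iff.mpr hne0
      have hSne : S.Nonempty := Finset.nonempty_iff_ne_empty.mpr (fun h => by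
        subst h
        exact hne0 N1)
      have hc1 : 1 ≤ S.card := Finset.Nonempty.card_pos hSne
      have hc2 : S.card ≤ n := by
        have := Finset.card_le_card (Finset.subset_univ S)
        rwa [Finset.card_univ, Fintype.card_fin] at this
      have hlt : S.card - 1 < n := by omega
      have := L_seg d hch σ hmono (supp_mem_chain d hsupp)
        (i := ⟨S.card - 1, hlt⟩) (by simp; omega)
      exact hS ⟨S.card - 1, hlt⟩ this.symm
  refine ⟨(σ, x), ⟨G4, G5⟩, ?_⟩
  -- uniqueness
  rintro ⟨τ, y⟩ ⟨hy, hdeq⟩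
  have hsupp_form : ∀ T ∈ d.support, ∃ m : Fin n, T = (Iic m).image τ := by
    intro T hT
    exact expo_support τ y (by rw [← hdeq]; exact Finsupp.mem_support_iff.mp hT)
  have hTmem : ∀ (m w : Fin n), τ w ∈ (Iic m).image τ ↔ w ≤ m := by
    intro m w
    rw [mem_seg]
    simp
  have hkmono : Monotone (keyf d ∘ τ) := by
    apply mono_of_succ
    intro j hj1
    set j0 : Fin n := ⟨j, by omega⟩ with hj0
    set j1 : Fin n := ⟨j + 1, hj1⟩ with hj1'
    simp only [Function.comp_apply]
    by_cases hd0 : d ((Iic j0).image τ) = 0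
    · have hd0' := hd0
      rw [hdeq, expo_apply] at hd0'
      have hy0 : j0 ∉ desSet n τ ∧ y j0 = 0 := by
        by_cases hmem : j0 ∈ desSet n τ
        · rw [if_pos hmem] at hd0'
          omega
        · rw [if_neg hmem, zero_add] at hd0'
          exact ⟨hmem, hd0'⟩
      have hττ : τ j0 ≤ τ j1 := by
        have h1 : ¬ τ j1 < τ j0 := by
          intro hcc
          apply hy0.1
          simp only [desSet, Finset.mem_filter, Finset.mem_univ, true_and]
          exact ⟨hj1, hcc⟩
        exact not_lt.mp h1
      have hceq : cfun d (τ j0) = cfun d (τ j1) := by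
        apply le_antisymm
        · obtain ⟨T, hT, hmem1, hTc⟩ := cfun_exists d (τ j1)
          have hj0T : τ j0 ∈ T := by
            rcases (mem_chain_iff d).mp hT with rfl | hTs
            · exact Finset.mem_univ _
            · obtain ⟨m, rfl⟩ := hsupp_form T hTs
              have h1 : j1 ≤ m := (hTmem m j1).mp hmem1
              exact (hTmem m j0).mpr (le_trans (Fin.le_def.mpr (Nat.le_succ j)) h1)
          rw [← hTc]
          exact cfun_le d hT hj0T
        · obtain ⟨T, hT, hmem0, hTc⟩ := cfun_exists d (τ j0)
          have hj1T : τ j1 ∈ T := by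
            rcases (mem_chain_iff d).mp hT with rfl | hTs
            · exact Finset.mem_univ _
            · obtain ⟨m, rfl⟩ := hsupp_form T hTs
              have h1 : j0 ≤ m := (hTmem m j0).mp hmem0
              have hmne : j0 ≠ m := by
                intro h
                subst h
                exact Finsupp.mem_support_iff.mp hTs hd0
              have : j0 < m := lt_of_le_of_ne h1 hmne
              exact (hTmem m j1).mpr (Fin.le_def.mpr (by
                have := Fin.lt_def.mp this
                simp [hj0, hj1'] at this ⊢
                omega))
          rw [← hTc]
          exact cfun_le d hT hj1T
      rw [keyf_def, keyf_def, hceq]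
      exact Nat.add_le_add_left (Fin.le_def.mp hττ) _
    · have hc0 : cfun d (τ j0) ≤ j + 1 := by
        have := cfun_le d (supp_mem_chain d (Finsupp.mem_support_iff.mpr hd0))
          ((hTmem j0 j0).mpr le_rfl)
        rwa [card_seg] at this
      have hc1 : j + 2 ≤ cfun d (τ j1) := by
        apply le_cfun
        intro T hT hmemT
        rcases (mem_chain_iff d).mp hT with rfl | hTs
        · rw [Finset.card_univ, Fintype.card_fin]
          omega
        · obtain ⟨m, rfl⟩ := hsupp_form T hTs
          have h1 : j1 ≤ m := (hTmem m j1).mp hmemT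
          rw [card_seg]
          have := Fin.le_def.mp h1
          simp [hj1'] at this
          omega
      have hv0 := (τ j0).isLt
      calc keyf d (τ j0) = n * cfun d (τ j0) + (τ j0 : ℕ) := keyf_def d _
      _ ≤ n * (j + 1) + n := by
          have := Nat.mul_le_mul_left n hc0
          omega
      _ = n * (j + 2) := by ring
      _ ≤ n * cfun d (τ j1) := Nat.mul_le_mul_left n hc1
      _ ≤ keyf d (τ j1) := by rw [keyf_def]; omega
  have hfeq : keyf d ∘ σ = keyf d ∘ τ := Tuple.unique_monotone hmono hkmono
  have hστ : σ = τ := Equiv.ext fun i => keyf_inj d (congrFun hfeq i)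
  have hyx : y = x := by
    funext i
    have h1 : d ((Iic i).image τ) = (if i ∈ desSet n τ then 1 else 0) + y i := by
      rw [hdeq, expo_apply]
    have h2 := G3 i
    rw [hστ] at h2
    omega
  rw [← hστ, hyx]

end Stmt14

/-- For `r ≥ 1`: every monomial `b^r_{(σ,X)}` (with `X` having multiplicities `< r`)
lies outside the monomial ideal `N_{r,n}`; conversely every monomial of `T_n` not in
`N_{r,n}` equals `b^r_{(σ,X)}` for a unique such pair `(σ, X)`. -/
theorem stmt14 (r n : ℕ) (hr : 1 ≤ r) :
    (∀ (σ : Equiv.Perm (Fin n)) (x : Fin n → ℕ), (∀ i, x i < r) →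
      bmon r n σ x ∉ Nrn r n) ∧
    (∀ d : (Finset (Fin n)) →₀ ℕ, (MvPolynomial.monomial d (1 : ℂ)) ∉ Nrn r n →
      ∃! p : Equiv.Perm (Fin n) × (Fin n → ℕ),
        (∀ i, p.2 i < r) ∧ MvPolynomial.monomial d (1 : ℂ) = bmon r n p.1 p.2) := by
  constructor
  · intro σ x hx
    rw [Stmt14.bmon_eq, Stmt14.not_mem_Nrn_iff]
    intro s hs
    exact Stmt14.part1_main r hr σ x hx s hs
  · intro d hd
    rw [Stmt14.not_mem_Nrn_iff] at hd
    obtain ⟨p, ⟨hp1, hp2⟩, hup⟩ := Stmt14.part2_core r hr d hd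
    refine ⟨p, ⟨hp1, ?_⟩, ?_⟩
    · rw [Stmt14.bmon_eq, hp2]
    · rintro q ⟨hq1, hq2⟩
      apply hup
      refine ⟨hq1, ?_⟩
      rw [Stmt14.bmon_eq] at hq2
      exact MvPolynomial.monomial_left_injective one_ne_zero hq2
end
end
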